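/- For a set of k rooted binary trees G_1,...,G_k, the number of distinct bipartitions (L_l, L_r) of the union of their leaf sets that are compatible with all trees (i.e., for each tree G_i, either all leaves of G_i lie in L_l, or all lie in L_r, or the leaves of the left subtree of G_i lie in one part and the leaves of the right subtree in the other) is at most 4^k/2 - 1. -/

import Mathlib

inductive BTree (α : Type) where
  | leaf : α → BTree α
  | node : BTree α → BTree α → BTree α
deriving DecidableEq

namespace BTree

variable {α : Type} [DecidableEq α] {σ : Type} [DecidableEq σ] {γ : Type} [DecidableEq γ]

/-- leaf (label) set of a tree -/
def leaves : BTree α → Finset α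
  | leaf a => {a}
  | node l r => leaves l ∪ leaves r

/-- the leaf labels are pairwise distinct -/
def nodupLeaves : BTree α → Prop
  | leaf _ => True
  | node l r => nodupLeaves l ∧ nodupLeaves r ∧ Disjoint (leaves l) (leaves r)

/-- the (unordered) bipartition `(Ll, Lr)` is compatible with the tree:
the whole leaf set lies in one part, or the leaf sets of the two root child
subtrees lie in opposite parts. -/
def compatible : BTree α → Finset α → Finset α → Prop
  | leaf a, Ll, Lr => a ∈ Ll ∨ a ∈ Lr
  | node l r, Ll, Lr =>
      leaves l ∪ leaves r ⊆ Ll ∨ leaves l ∪ leaves r ⊆ Lr ∨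
      (leaves l ⊆ Ll ∧ leaves r ⊆ Lr) ∨ (leaves l ⊆ Lr ∧ leaves r ⊆ Ll)

/-- union of the leaf sets of a list of trees -/
def unionLeaves (Gs : List (BTree α)) : Finset α :=
  Gs.foldr (fun g acc => leaves g ∪ acc) ∅

/-- `(Ll, Lr)` is a bipartition of the union of the leaf sets (both parts
nonempty) compatible with every tree in the list. -/
def isCompBip (Gs : List (BTree α)) (Ll Lr : Finset α) : Prop :=
  Ll ∪ Lr = unionLeaves Gs ∧ Disjoint Ll Lr ∧ Ll.Nonempty ∧ Lr.Nonempty ∧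
    ∀ G ∈ Gs, compatible G Ll Lr

/-- restriction `G|_L` : remove the leaves not in `L` and suppress the
resulting degree-2 nodes; `none` if no leaf of `G` lies in `L`. -/
def restrict : BTree α → Finset α → Option (BTree α)
  | leaf a, L => if a ∈ L then some (leaf a) else none
  | node l r, L =>
      match restrict l L, restrict r L with
      | some l', some r' => some (node l' r')
      | some l', none => some l'
      | none, some r' => some r'
      | none, none => none

/-- isomorphism of rooted leaf-labeled trees (children are unordered) -/
inductive Iso : BTree α → BTree α → Prop
  | leaf (a : α) : Iso (leaf a) (leaf a)
  | node {l r l' r' : BTree α} : Iso l l' → Iso r r' → Iso (node l r) (node l' r')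
  | swap {l r l' r' : BTree α} : Iso l r' → Iso r l' → Iso (node l r) (node l' r')

/-- `G` displays `G'` : the restriction of `G` to the leaves of `G'` is
isomorphic to `G'` (preserving leaf labels). -/
def displays (G G' : BTree α) : Prop :=
  ∃ t, restrict G (leaves G') = some t ∧ Iso t G'

/-- `Subtree t T` : `t` is a complete rooted subtree of `T` (i.e. `t = T[x]`
for some node `x` of `T`).  Equivalently, the root of `T` is a (weak)
ancestor of the root of `t`. -/
inductive Subtree : BTree α → BTree α → Prop
  | refl (t : BTree α) : Subtree t t
  | left {t l r : BTree α} : Subtree t l → Subtree t (node l r)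
  | right {t l r : BTree α} : Subtree t r → Subtree t (node l r)

/-- two nodes (complete subtrees) are separated: neither is a (weak)
ancestor of the other -/
def separated (u v : BTree α) : Prop := ¬ Subtree u v ∧ ¬ Subtree v u

/-- the subtree rooted at the lowest common ancestor of the leaf set `L` -/
def lcaSub : BTree α → Finset α → BTree α
  | leaf a, _ => leaf a
  | node l r, L =>
      if L ⊆ leaves l then lcaSub l L
      else if L ⊆ leaves r then lcaSub r L
      else node l r

/-- `T1` and `T2` induce the same rooted triplet topology on `{a, b, c}` -/
def sameTriplet (T1 T2 : BTree α) (a b c : α) : Prop :=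
  ∃ t1 t2, restrict T1 {a, b, c} = some t1 ∧ restrict T2 {a, b, c} = some t2 ∧ Iso t1 t2

/-- `GTR` is triplet respecting w.r.t. `GInit` and the family `Gs` : for any
three leaves taken from three distinct trees of `Gs`, `GInit` and `GTR`
induce the same rooted triplet topology. -/
def tripletRespecting (GInit GTR : BTree α) (Gs : List (BTree α)) : Prop :=
  ∀ G1 ∈ Gs, ∀ G2 ∈ Gs, ∀ G3 ∈ Gs, G1 ≠ G2 → G1 ≠ G3 → G2 ≠ G3 →
    ∀ a ∈ leaves G1, ∀ b ∈ leaves G2, ∀ c ∈ leaves G3, sameTriplet GInit GTR a b c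

/-- at least two (distinct) trees of `Gs` are subtrees of `t` : `|𝒢(t)| ≥ 2` -/
def atLeastTwo (Gs : List (BTree α)) (t : BTree α) : Prop :=
  ∃ Gi ∈ Gs, ∃ Gj ∈ Gs, Gi ≠ Gj ∧ Subtree Gi t ∧ Subtree Gj t

/-- `Graft T' T R` : `R` is obtained from `T` by grafting `T'` at some node
`x*` of `T`, i.e. subdividing the edge above `x*` (or adding a new root if
`x*` is the root) and attaching `T'` as the new sibling of `x*`. -/
inductive Graft (T' : BTree α) : BTree α → BTree α → Prop
  | atRootL (T : BTree α) : Graft T' T (node T' T)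
  | atRootR (T : BTree α) : Graft T' T (node T T')
  | left {l r g : BTree α} : Graft T' l g → Graft T' (node l r) (node g r)
  | right {l r g : BTree α} : Graft T' r g → Graft T' (node l r) (node l g)

/-- number of edges from the root of `u` down to the node `v`, if `v` is a
node (complete subtree) of `u` -/
def edist : BTree σ → BTree σ → Option ℕ
  | leaf a, v => if leaf a = v then some 0 else none
  | node l r, v =>
      if node l r = v then some 0 else
      match edist l v, edist r v with
      | some n, _ => some (n + 1)
      | none, some n => some (n + 1)
      | none, none => none

/-- number of nodes strictly between an ancestor `u` and a descendant `v` -/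
def inter (u v : BTree σ) : ℕ := (edist u v).getD 1 - 1

/-- node (`lca`) of the species tree `S` associated to a set `L` of genes -/
def specOf (S : BTree σ) (s : γ → σ) (L : Finset γ) : BTree σ := lcaSub S (L.image s)

/-- the species-tree node `s(x)` associated with a gene-tree node `x`
(lca of the species of the leaves below `x`) -/
def spec (S : BTree σ) (s : γ → σ) (t : BTree γ) : BTree σ := specOf S s (leaves t)

/-- the local LCA-reconciliation cost of a node whose own mapping is `su`
and whose children map to `sl` and `sr` -/
def localCost (su sl sr : BTree σ) : ℕ :=
  inter su sl + inter su sr +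
    (if su = sl ∧ su = sr then 1 else if su = sl ∨ su = sr then 2 else 0)

/-- number of duplication nodes of the LCA-reconciliation -/
def dupCount (S : BTree σ) (s : γ → σ) : BTree γ → ℕ
  | leaf _ => 0
  | node l r =>
      dupCount S s l + dupCount S s r +
      (if spec S s (node l r) = spec S s l ∨ spec S s (node l r) = spec S s r then 1 else 0)

/-- minimum number of losses of the LCA-reconciliation: for each edge `(x,c)`,
`inter(s(x), s(c))` losses, plus one more loss for each child `c` of a
duplication node `x` with `s(c) ≠ s(x)` -/
def lossCount (S : BTree σ) (s : γ → σ) : BTree γ → ℕ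
  | leaf _ => 0
  | node l r =>
      lossCount S s l + lossCount S s r +
      (if spec S s (node l r) = spec S s l ∨ spec S s (node l r) = spec S s r then
        (inter (spec S s (node l r)) (spec S s l) +
          if spec S s l = spec S s (node l r) then 0 else 1) +
        (inter (spec S s (node l r)) (spec S s r) +
          if spec S s r = spec S s (node l r) then 0 else 1)
      else
        inter (spec S s (node l r)) (spec S s l) + inter (spec S s (node l r)) (spec S s r))

/-- sum over all internal nodes of the local LCA-reconciliation costs -/
def totalLocal (S : BTree σ) (s : γ → σ) : BTree γ → ℕ
  | leaf _ => 0
  | node l r =>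
      totalLocal S s l + totalLocal S s r +
      localCost (spec S s (node l r)) (spec S s l) (spec S s r)

/-- `G` is a supertree for `Gs` : a tree on the union of the leaf sets
(each leaf once) displaying every tree of `Gs` -/
def isSupertree (Gs : List (BTree γ)) (G : BTree γ) : Prop :=
  leaves G = unionLeaves Gs ∧ nodupLeaves G ∧ ∀ Gi ∈ Gs, displays G Gi

/-- `MinSGT` : minimum LCA-reconciliation cost over all supertrees -/
noncomputable def reconMin (S : BTree σ) (s : γ → σ) (Gs : List (BTree γ)) : ℕ :=
  sInf {c | ∃ G : BTree γ, isSupertree Gs G ∧ totalLocal S s G = c}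

/-- restrictions `G_i|_L` of the trees of the list (dropping empty ones) -/
def restrictList (Gs : List (BTree γ)) (L : Finset γ) : List (BTree γ) :=
  Gs.filterMap fun G => restrict G L

/-- the four possible ordered choices for distributing a tree into the two
parts of a bipartition: whole tree left, whole tree right, left subtree
left & right subtree right, left subtree right & right subtree left -/
def pick : BTree α → ℕ → Finset α × Finset α
  | G, 0 => (leaves G, ∅)
  | G, 1 => (∅, leaves G)
  | node l r, 2 => (leaves l, leaves r)
  | node l r, _ => (leaves r, leaves l)
  | G, _ => (∅, leaves G)

/-- left part produced by a distribution `f` of choices -/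
def partsLeft (Gs : List (BTree α)) (f : Fin Gs.length → Fin 4) : Finset α :=
  Finset.univ.biUnion fun i => (pick (Gs.get i) (f i).val).1

/-- right part produced by a distribution `f` of choices -/
def partsRight (Gs : List (BTree α)) (f : Fin Gs.length → Fin 4) : Finset α :=
  Finset.univ.biUnion fun i => (pick (Gs.get i) (f i).val).2

/-- the complete subtree at a position (path from the root) -/
def subtreeAt : BTree α → List Bool → Option (BTree α)
  | t, [] => some t
  | leaf _, _ :: _ => none
  | node l _, false :: p => subtreeAt l p
  | node _ r, true :: p => subtreeAt r p

/-- the set of positions of internal nodes -/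
def internalPos : BTree α → Finset (List Bool)
  | leaf _ => ∅
  | node l r =>
      insert [] ((internalPos l).image (List.cons false) ∪
        (internalPos r).image (List.cons true))

end BTree

/-- labeled gene trees: each internal node carries `true` (Dup) or `false` (Spec) -/
inductive LTree (α : Type) where
  | leaf : α → LTree α
  | node : Bool → LTree α → LTree α → LTree α
deriving DecidableEq

namespace LTree

variable {α : Type} [DecidableEq α]

def leaves : LTree α → Finset α
  | leaf a => {a}
  | node _ l r => leaves l ∪ leaves r

/-- underlying unlabeled tree -/
def shape : LTree α → BTree α
  | leaf a => BTree.leaf a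
  | node _ l r => BTree.node (shape l) (shape r)

/-- the event label of the root (`none` for a leaf) -/
def rootEv : LTree α → Option Bool
  | leaf _ => none
  | node e _ _ => some e

inductive Subtree : LTree α → LTree α → Prop
  | refl (t : LTree α) : Subtree t t
  | left {t l r : LTree α} {e : Bool} : Subtree t l → Subtree t (node e l r)
  | right {t l r : LTree α} {e : Bool} : Subtree t r → Subtree t (node e l r)

/-- the subtree rooted at the lowest common ancestor of the leaf set `L` -/
def lcaSub : LTree α → Finset α → LTree α
  | leaf a, _ => leaf a
  | node e l r, L =>
      if L ⊆ leaves l then lcaSub l L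
      else if L ⊆ leaves r then lcaSub r L
      else node e l r

/-- `G` displays `G'` (topologically, ignoring labels) -/
def displaysL (G G' : LTree α) : Prop := BTree.displays (shape G) (shape G')

/-- `(G, ev_G)` is label-compatible with `(G', ev_{G'})` : every internal
node `x'` of `G'` has the same event label as `lca_G(L(x'))` -/
def labelCompatible (G G' : LTree α) : Prop :=
  ∀ (e : Bool) (l r : LTree α), Subtree (node e l r) G' →
    rootEv (lcaSub G (leaves (node e l r))) = some e

end LTree

/-!
Once each tree `G` is compatible with `(Ll, Lr)`, the trace `Ll ∩ L(G)` is one of at most four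
sets: `L(G)`, `∅`, `L(G_l)` or `L(G_r)`. Since `Ll ⊆ L`, where `L` is the union of the leaf sets,
`Ll` is the union of its traces, so there are at most `4^k` candidates for `Ll`; the two trivial
ones, `∅` and `L`, are excluded because both parts are nonempty. As `Lr = L \ Ll`, this bounds the
ordered compatible bipartitions by `4^k - 2`, and each unordered one arises from exactly two of
them.
-/

theorem Finset.inter_union_eq_left_of_subset {α : Type} [DecidableEq α] {s t u v : Finset α}
    (hst : Disjoint s t) (hu : u ⊆ s) (hv : v ⊆ t) : s ∩ (u ∪ v) = u := by
  rw [Finset.inter_union_distrib_left, Finset.inter_eq_right.mpr hu,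
    Finset.disjoint_iff_inter_eq_empty.mp (hst.mono_right hv), Finset.union_empty]

namespace BTree

open Finset

variable {α : Type} [DecidableEq α]

def sideChoices : BTree α → Finset (Finset α)
  | leaf a => {{a}, ∅}
  | node l r => {leaves l ∪ leaves r, ∅, leaves l, leaves r}

theorem card_sideChoices_le (G : BTree α) : #(sideChoices G) ≤ 4 := by
  cases G with
  | leaf a => exact card_le_two.trans (by norm_num)
  | node l r => exact card_le_four

theorem empty_mem_sideChoices (G : BTree α) : ∅ ∈ sideChoices G := by
  cases G <;> simp [sideChoices]

theorem leaves_mem_sideChoices (G : BTree α) : leaves G ∈ sideChoices G := by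
  cases G <;> simp [sideChoices, leaves]

theorem inter_leaves_mem_sideChoices {G : BTree α} {Ll Lr : Finset α}
    (hG : compatible G Ll Lr) (hd : Disjoint Ll Lr) : Ll ∩ leaves G ∈ sideChoices G := by
  cases G with
  | leaf a =>
    rcases hG with ha | ha
    · simp [sideChoices, leaves, ha]
    · simp [sideChoices, leaves, disjoint_right.mp hd ha]
  | node l r =>
    have key := fun {u v : Finset α} (hu : u ⊆ Ll) (hv : v ⊆ Lr) =>
      inter_union_eq_left_of_subset hd hu hv
    simp only [sideChoices, leaves, mem_insert, mem_singleton]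
    rcases hG with h | h | ⟨hl, hr⟩ | ⟨hl, hr⟩
    · left; simpa using key h (empty_subset Lr)
    · right; left; simpa using key (empty_subset Ll) h
    · right; right; left; exact key hl hr
    · right; right; right; rw [union_comm]; exact key hr hl

def sides : List (BTree α) → Finset (Finset α)
  | [] => {∅}
  | G :: Gs => image₂ (· ∪ ·) (sideChoices G) (sides Gs)

theorem card_sides_le (Gs : List (BTree α)) : #(sides Gs) ≤ 4 ^ Gs.length := by
  induction Gs with
  | nil => simp [sides]
  | cons G Gs ih =>
    calc #(sides (G :: Gs)) ≤ #(sideChoices G) * #(sides Gs) := card_image₂_le _ _ _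
      _ ≤ 4 * 4 ^ Gs.length := Nat.mul_le_mul (card_sideChoices_le G) ih
      _ = 4 ^ (G :: Gs).length := by rw [List.length_cons, pow_succ']

theorem empty_mem_sides (Gs : List (BTree α)) : ∅ ∈ sides Gs := by
  induction Gs with
  | nil => simp [sides]
  | cons G Gs ih =>
    simpa only [sides, empty_union] using
      mem_image₂_of_mem (f := (· ∪ ·)) (empty_mem_sideChoices G) ih

theorem unionLeaves_mem_sides (Gs : List (BTree α)) : unionLeaves Gs ∈ sides Gs := by
  induction Gs with
  | nil => simp [sides, unionLeaves]
  | cons G Gs ih => exact mem_image₂_of_mem (leaves_mem_sideChoices G) ih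

theorem inter_unionLeaves_mem_sides {Gs : List (BTree α)} {Ll Lr : Finset α}
    (hd : Disjoint Ll Lr) (h : ∀ G ∈ Gs, compatible G Ll Lr) :
    Ll ∩ unionLeaves Gs ∈ sides Gs := by
  induction Gs with
  | nil => simp [sides, unionLeaves]
  | cons G Gs ih =>
    rw [show unionLeaves (G :: Gs) = leaves G ∪ unionLeaves Gs from rfl,
      inter_union_distrib_left]
    exact mem_image₂_of_mem (inter_leaves_mem_sideChoices (h G (by simp)) hd)
      (ih fun G' hG' => h G' (by simp [hG']))

theorem compatible_symm {G : BTree α} {Ll Lr : Finset α} (h : compatible G Ll Lr) :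
    compatible G Lr Ll := by
  cases G <;> simp only [compatible] at h ⊢ <;> tauto

namespace isCompBip

variable {Gs : List (BTree α)} {Ll Lr : Finset α}

theorem symm (h : isCompBip Gs Ll Lr) : isCompBip Gs Lr Ll :=
  ⟨by rw [union_comm, h.1], h.2.1.symm, h.2.2.2.1, h.2.2.1,
    fun G hG => compatible_symm (h.2.2.2.2 G hG)⟩

theorem subset_unionLeaves (h : isCompBip Gs Ll Lr) : Ll ⊆ unionLeaves Gs :=
  h.1 ▸ subset_union_left

theorem eq_sdiff (h : isCompBip Gs Ll Lr) : Lr = unionLeaves Gs \ Ll := by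
  rw [← h.1, union_sdiff_cancel_left h.2.1]

theorem mem_sides (h : isCompBip Gs Ll Lr) : Ll ∈ sides Gs := by
  simpa [inter_eq_left.mpr h.subset_unionLeaves] using
    inter_unionLeaves_mem_sides h.2.1 h.2.2.2.2

end isCompBip

theorem ncard_setOf_isCompBip_sdiff_le (Gs : List (BTree α)) :
    {B | isCompBip Gs B (unionLeaves Gs \ B)}.ncard ≤ 4 ^ Gs.length - 2 := by
  rcases (unionLeaves Gs).eq_empty_or_nonempty with hU | hU
  · suffices {B | isCompBip Gs B (unionLeaves Gs \ B)} = ∅ by simp [this]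
    refine Set.eq_empty_of_forall_notMem fun B hB => ?_
    obtain ⟨a, ha⟩ := hB.2.2.1
    simpa [hU] using hB.subset_unionLeaves ha
  have hsub : {B | isCompBip Gs B (unionLeaves Gs \ B)} ⊆
      ↑(sides Gs \ {∅, unionLeaves Gs}) := by
    intro B hB
    simp only [coe_sdiff, Set.mem_sdiff, mem_coe, mem_insert, mem_singleton, not_or]
    refine ⟨hB.mem_sides, hB.2.2.1.ne_empty, fun hBU => ?_⟩
    simpa [hBU] using hB.2.2.2.1
  have hpair : {∅, unionLeaves Gs} ⊆ sides Gs := by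
    simp [insert_subset_iff, empty_mem_sides, unionLeaves_mem_sides]
  calc {B | isCompBip Gs B (unionLeaves Gs \ B)}.ncard
      ≤ #(sides Gs \ {∅, unionLeaves Gs}) := by
        simpa only [Set.ncard_coe_finset] using Set.ncard_le_ncard hsub
    _ = #(sides Gs) - 2 := by rw [card_sdiff_of_subset hpair, card_pair hU.ne_empty.symm]
    _ ≤ 4 ^ Gs.length - 2 := Nat.sub_le_sub_right (card_sides_le Gs) 2

theorem two_mul_ncard_compatibleBipartitions_le (Gs : List (BTree α)) :
    2 * {p : Sym2 (Finset α) | ∃ Ll Lr, p = s(Ll, Lr) ∧ isCompBip Gs Ll Lr}.ncard ≤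
      4 ^ Gs.length - 2 := by
  classical
  set U := unionLeaves Gs
  set A := (sides Gs).filter fun B => isCompBip Gs B (U \ B)
  have hA : (A : Set (Finset α)) = {B | isCompBip Gs B (U \ B)} := by
    ext B
    simpa [A] using fun hB => hB.mem_sides
  let ψ : Finset α → Sym2 (Finset α) := fun B => s(B, U \ B)
  have hsub : {p : Sym2 (Finset α) | ∃ Ll Lr, p = s(Ll, Lr) ∧ isCompBip Gs Ll Lr} ⊆
      ↑(A.image ψ) := by
    rintro _ ⟨Ll, Lr, rfl, h⟩
    obtain rfl : Lr = U \ Ll := h.eq_sdiff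
    rw [coe_image, hA]
    exact ⟨Ll, h, rfl⟩
  -- each unordered bipartition is the image of both of its sides
  have hfiber : ∀ p ∈ A.image ψ, 2 ≤ #{B ∈ A | ψ B = p} := by
    simp only [mem_image]
    rintro _ ⟨B, hBA, rfl⟩
    have hB : isCompBip Gs B (U \ B) := (mem_filter.mp hBA).2
    have hUB : U \ (U \ B) = B := Finset.sdiff_sdiff_eq_self hB.subset_unionLeaves
    have hBc : isCompBip Gs (U \ B) B := hB.symm
    have hne : B ≠ U \ B := fun h => hB.2.2.2.1.ne_empty (disjoint_self.mp (h ▸ hB.2.1))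
    calc 2 = #{B, U \ B} := (card_pair hne).symm
      _ ≤ #{B' ∈ A | ψ B' = ψ B} := card_le_card <| by
        simp only [insert_subset_iff, singleton_subset_iff, mem_filter, A, ψ, hUB]
        exact ⟨⟨⟨hB.mem_sides, hB⟩, trivial⟩, ⟨hBc.mem_sides, hBc⟩, Sym2.eq_swap⟩
  calc 2 * {p : Sym2 (Finset α) | ∃ Ll Lr, p = s(Ll, Lr) ∧ isCompBip Gs Ll Lr}.ncard
      ≤ 2 * #(A.image ψ) := by
        gcongr
        simpa only [Set.ncard_coe_finset] using Set.ncard_le_ncard hsub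
    _ ≤ #A := mul_card_image_le_card A 2 hfiber
    _ ≤ 4 ^ Gs.length - 2 := by
        rw [← Set.ncard_coe_finset, hA]; exact ncard_setOf_isCompBip_sdiff_le Gs

end BTree

/-- the number of distinct (unordered) bipartitions of the union
of the leaf sets compatible with all `k` input trees is at most `4^k/2 - 1`. -/
theorem stmt0 {α : Type} [DecidableEq α] (Gs : List (BTree α)) :
    Set.ncard {p : Sym2 (Finset α) |
        ∃ Ll Lr : Finset α, p = s(Ll, Lr) ∧ BTree.isCompBip Gs Ll Lr} ≤
      4 ^ Gs.length / 2 - 1 := by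
  have := BTree.two_mul_ncard_compatibleBipartitions_le Gs
  omega
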